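/- arXiv:1901.10115 — 2 statements merged into one kernel-verified Lean document; each statement's English description precedes it below -/
import Mathlib

section
/- Each of the sets D_n (n ≠ 0), LD_t (t ≠ 0), H, V, and {(0,0)} is a single orbit of SL(2,ℝ) acting diagonally on ℝ²×ℝ². In particular, for n ≠ 0, D_n = SL(2,ℝ)·((1,0)^T, (0,n)^T), and for t ≠ 0, LD_t = SL(2,ℝ)·((1,0)^T, (t,0)^T). -/
/-!
The quantity `v 0 * w 1 - v 1 * w 0 = det (v w)` is multiplied by `det g = 1` under the
diagonal action, and a nonzero vector stays nonzero, so every stratum is invariant. Conversely,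
if `det (v w) = n ≠ 0` the matrix with columns `v` and `w / n` lies in `SL(2,ℝ)` and moves
`(e₁, n e₂)` to `(v, w)`; completing a nonzero `v` to such a pair with `n = 1` moves `e₁`
to `v`, which gives transitivity on the strata where `w` is a multiple of `v` (or `v = 0`).
-/

open Matrix

open scoped MatrixGroups

def diagOrbit (p : (Fin 2 → ℝ) × (Fin 2 → ℝ)) : Set ((Fin 2 → ℝ) × (Fin 2 → ℝ)) :=
  {x | ∃ g : Matrix.SpecialLinearGroup (Fin 2) ℝ,
    x = ((g : Matrix (Fin 2) (Fin 2) ℝ).mulVec p.1, (g : Matrix (Fin 2) (Fin 2) ℝ).mulVec p.2)}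

theorem Matrix.SpecialLinearGroup.mulVec_eq_zero_iff {ι R : Type*} [DecidableEq ι] [Fintype ι]
    [CommRing R] (g : SpecialLinearGroup ι R) {v : ι → R} :
    (g : Matrix ι ι R) *ᵥ v = 0 ↔ v = 0 :=
  smul_eq_zero_iff_eq g

theorem Matrix.cross_mulVec_fin_two {R : Type*} [CommRing R] (M : Matrix (Fin 2) (Fin 2) R)
    (v w : Fin 2 → R) :
    (M *ᵥ v) 0 * (M *ᵥ w) 1 - (M *ᵥ v) 1 * (M *ᵥ w) 0 = M.det * (v 0 * w 1 - v 1 * w 0) := by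
  simp only [mulVec, dotProduct, Fin.sum_univ_two, det_fin_two]
  ring

theorem e₁_ne_zero {R : Type*} [Zero R] [One R] [NeZero (1 : R)] :
    (![1, 0] : Fin 2 → R) ≠ 0 :=
  fun h => one_ne_zero (congrFun h 0)

section Field

variable {K : Type*} [Field K]

theorem exists_SL2_mulVec_eq_of_cross_eq {n : K} (hn : n ≠ 0) {v w : Fin 2 → K}
    (h : v 0 * w 1 - v 1 * w 0 = n) :
    ∃ g : SL(2, K), (g : Matrix (Fin 2) (Fin 2) K) *ᵥ ![1, 0] = v ∧
      (g : Matrix (Fin 2) (Fin 2) K) *ᵥ ![0, n] = w := by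
  refine ⟨⟨!![v 0, w 0 / n; v 1, w 1 / n], ?_⟩, ?_, ?_⟩
  · rw [det_fin_two_of]
    field_simp
    linear_combination h
  all_goals ext i; fin_cases i <;> simp [mul_div_cancel₀ _ hn]

theorem exists_cross_eq_one {v : Fin 2 → K} (hv : v ≠ 0) :
    ∃ w : Fin 2 → K, v 0 * w 1 - v 1 * w 0 = 1 := by
  by_cases h0 : v 0 = 0
  · have h1 : v 1 ≠ 0 := fun h1 => hv (by ext i; fin_cases i <;> assumption)
    exact ⟨![-(v 1)⁻¹, 0], by simp [h0, h1]⟩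
  · exact ⟨![0, (v 0)⁻¹], by simp [h0]⟩

theorem exists_SL2_mulVec_eq_of_ne_zero {v : Fin 2 → K} (hv : v ≠ 0) :
    ∃ g : SL(2, K), (g : Matrix (Fin 2) (Fin 2) K) *ᵥ ![1, 0] = v := by
  obtain ⟨w, hw⟩ := exists_cross_eq_one hv
  obtain ⟨g, hg, -⟩ := exists_SL2_mulVec_eq_of_cross_eq one_ne_zero hw
  exact ⟨g, hg⟩

end Field

theorem diagOrbit_eq_setOf_cross_eq {n : ℝ} (hn : n ≠ 0) :
    diagOrbit (![1, 0], ![0, n]) = {p | p.1 0 * p.2 1 - p.1 1 * p.2 0 = n} := by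
  ext p
  constructor
  · rintro ⟨g, rfl⟩
    rw [Set.mem_ofPred_eq, cross_mulVec_fin_two, g.det_coe, one_mul]
    simp
  · intro h
    obtain ⟨g, h₁, h₂⟩ := exists_SL2_mulVec_eq_of_cross_eq hn h
    exact ⟨g, by rw [h₁, h₂]⟩

theorem diagOrbit_eq_setOf_eq_smul (t : ℝ) :
    diagOrbit (![1, 0], t • ![1, 0]) = {p | p.1 ≠ 0 ∧ p.2 = t • p.1} := by
  ext p
  constructor
  · rintro ⟨g, rfl⟩
    exact ⟨g.mulVec_eq_zero_iff.not.mpr e₁_ne_zero,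
      mulVec_smul (g : Matrix (Fin 2) (Fin 2) ℝ) t _⟩
  · rintro ⟨hv, hw⟩
    obtain ⟨g, hg⟩ := exists_SL2_mulVec_eq_of_ne_zero hv
    exact ⟨g, by rw [mulVec_smul, hg, ← hw]⟩

theorem diagOrbit_zero_left :
    diagOrbit (0, ![1, 0]) = {p | p.1 = 0 ∧ p.2 ≠ 0} := by
  ext p
  constructor
  · rintro ⟨g, rfl⟩
    exact ⟨mulVec_zero (g : Matrix (Fin 2) (Fin 2) ℝ),
      g.mulVec_eq_zero_iff.not.mpr e₁_ne_zero⟩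
  · rintro ⟨hv, hw⟩
    obtain ⟨g, hg⟩ := exists_SL2_mulVec_eq_of_ne_zero hw
    exact ⟨g, by rw [mulVec_zero, hg, ← hv]⟩

theorem diagOrbit_zero : diagOrbit (0, 0) = {(0, 0)} := by
  ext p
  simp [diagOrbit]

/-- Each of `D_n` (`n ≠ 0`), `LD_t` (`t ≠ 0`), `H`, `V`, `{(0,0)}` is a single orbit of the
diagonal `SL(2,ℝ)`-action on `ℝ² × ℝ²`; in particular `D_n = SL(2,ℝ)·((1,0)ᵀ,(0,n)ᵀ)` and
`LD_t = SL(2,ℝ)·((1,0)ᵀ,(t,0)ᵀ)`. -/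
theorem orbits_of_strata :
    (∀ n : ℝ, n ≠ 0 →
      {p : (Fin 2 → ℝ) × (Fin 2 → ℝ) | p.1 0 * p.2 1 - p.1 1 * p.2 0 = n}
        = diagOrbit (![1, 0], ![0, n])) ∧
    (∀ t : ℝ, t ≠ 0 →
      {p : (Fin 2 → ℝ) × (Fin 2 → ℝ) | p.1 ≠ 0 ∧ p.2 = t • p.1}
        = diagOrbit (![1, 0], ![t, 0])) ∧
    ({p : (Fin 2 → ℝ) × (Fin 2 → ℝ) | p.1 ≠ 0 ∧ p.2 = 0} = diagOrbit (![1, 0], 0)) ∧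
    ({p : (Fin 2 → ℝ) × (Fin 2 → ℝ) | p.1 = 0 ∧ p.2 ≠ 0} = diagOrbit (0, ![1, 0])) ∧
    ({((0, 0) : (Fin 2 → ℝ) × (Fin 2 → ℝ))} = diagOrbit (0, 0)) := by
  refine ⟨fun n hn => (diagOrbit_eq_setOf_cross_eq hn).symm, fun t _ => ?_, ?_,
    diagOrbit_zero_left.symm, diagOrbit_zero.symm⟩
  · simpa using (diagOrbit_eq_setOf_eq_smul t).symm
  · simpa using (diagOrbit_eq_setOf_eq_smul 0).symm
end

section
/- Fix a nonzero integer n. The set D_n^V = {(v,w) ∈ ℤ²_prim × ℤ²_prim : det(v w) = n} decomposes as the disjoint union over m with 1 ≤ m ≤ |n| and gcd(m,n) = 1 of the SL(2,ℤ)-orbits E_n^(m) = {γ·[[1,m],[0,n]] : γ ∈ SL(2,ℤ)}, where a 2×2 matrix is identified with the pair of its columns. In particular D_n^V is a union of exactly φ(n') such orbits where n' = |n| and φ is Euler's totient (counting m with 1 ≤ m ≤ |n|, gcd(m,n)=1). -/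
open Matrix

/-- The set of integer matrices with both columns primitive and determinant `n`,
i.e. `D_n^V` with matrices identified with pairs of column vectors. -/
def DnV (n : ℤ) : Set (Matrix (Fin 2) (Fin 2) ℤ) :=
  {A | Int.gcd (A 0 0) (A 1 0) = 1 ∧ Int.gcd (A 0 1) (A 1 1) = 1 ∧ A.det = n}

/-- The `SL(2,ℤ)`-orbit `E_n^(m) = {γ·[[1,m],[0,n]] : γ ∈ SL(2,ℤ)}`. -/
def EnM (n m : ℤ) : Set (Matrix (Fin 2) (Fin 2) ℤ) :=
  {A | ∃ γ : Matrix.SpecialLinearGroup (Fin 2) ℤ,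
    A = (γ : Matrix (Fin 2) (Fin 2) ℤ) * !![1, m; 0, n]}

/-!
A primitive column completes to a matrix in `SL(2,ℤ)`, and `SL(2,ℤ)` maps primitive columns to
primitive columns. So if `A ∈ D_n^V`, completing its first column to `γ` gives
`γ⁻¹ A = [[1, x], [0, n]]` with `gcd(x, n) = 1`. Right multiplication by `[[1, k], [0, 1]]` turns
`[[1, x], [0, n]]` into `[[1, x + k n], [0, n]]`, and conversely an element of `SL(2,ℤ)` fixing
`e₁` is of this unipotent form; hence `E_n^(x) = E_n^(x')` exactly when `x ≡ x' (mod n)`, and the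
orbits are indexed by the residues `1 ≤ m ≤ |n|` prime to `n`, of which there are `φ(|n|)`.
-/

section

variable {R : Type*} [CommRing R] {g A : Matrix (Fin 2) (Fin 2) R}

theorem Matrix.isCoprime_mul_apply_of_det_eq_one (hg : g.det = 1) {j : Fin 2}
    (h : IsCoprime (A 0 j) (A 1 j)) : IsCoprime ((g * A) 0 j) ((g * A) 1 j) := by
  obtain ⟨s, t, hst⟩ := h
  rw [det_fin_two] at hg
  refine ⟨s * g 1 1 - t * g 1 0, t * g 0 0 - s * g 0 1, ?_⟩
  simp only [mul_apply, Fin.sum_univ_two]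
  linear_combination hst + (s * A 0 j + t * A 1 j) * hg

theorem Matrix.isCoprime_mul_apply_iff_of_det_eq_one (hg : g.det = 1) (j : Fin 2) :
    IsCoprime ((g * A) 0 j) ((g * A) 1 j) ↔ IsCoprime (A 0 j) (A 1 j) := by
  refine ⟨fun h => ?_, isCoprime_mul_apply_of_det_eq_one hg⟩
  have hadj : g.adjugate * (g * A) = A := by
    rw [← Matrix.mul_assoc, adjugate_mul, hg, one_smul, Matrix.one_mul]
  have hdet : g.adjugate.det = 1 := by rw [det_adjugate, hg, one_pow]
  simpa only [hadj] using isCoprime_mul_apply_of_det_eq_one hdet h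

end

theorem Int.exists_one_le_le_abs_modEq {n : ℤ} (hn : n ≠ 0) (x : ℤ) :
    ∃ m, 1 ≤ m ∧ m ≤ |n| ∧ m ≡ x [ZMOD n] := by
  refine ⟨(x - 1) % n + 1, ?_, ?_, ?_⟩
  · linarith [Int.emod_nonneg (x - 1) hn]
  · have := Int.emod_lt (x - 1) hn
    rw [Int.natCast_natAbs] at this
    linarith
  · simpa using (Int.mod_modEq (x - 1) n).add_right 1

theorem Int.ModEq.isCoprime_iff {n a b : ℤ} (h : a ≡ b [ZMOD n]) :
    IsCoprime a n ↔ IsCoprime b n := by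
  obtain ⟨k, hk⟩ := Int.modEq_iff_dvd.mp h
  rw [show b = a + k * n by linear_combination hk, IsCoprime.add_mul_right_left_iff]

theorem Int.eq_of_modEq_of_one_le_le_abs {n m₁ m₂ : ℤ} (h : m₁ ≡ m₂ [ZMOD n])
    (h₁ : 1 ≤ m₁) (h₁' : m₁ ≤ |n|) (h₂ : 1 ≤ m₂) (h₂' : m₂ ≤ |n|) : m₁ = m₂ := by
  have hdvd : |n| ∣ m₂ - m₁ := (abs_dvd _ _).mpr (Int.modEq_iff_dvd.mp h)
  have hlt : |m₂ - m₁| < |n| := by rw [abs_lt]; constructor <;> linarith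
  linarith [Int.eq_zero_of_abs_lt_dvd hdvd hlt]

theorem ncard_setOf_coprime_Icc_abs_eq_totient (n : ℤ) :
    {m : ℤ | 1 ≤ m ∧ m ≤ |n| ∧ Int.gcd m n = 1}.ncard = Nat.totient n.natAbs := by
  have hset : {m : ℤ | 1 ≤ m ∧ m ≤ |n| ∧ Int.gcd m n = 1} =
      Nat.cast '' ↑({k ∈ Finset.Ico 1 (1 + n.natAbs) | n.natAbs.Coprime k}) := by
    ext m
    simp only [Set.mem_ofPred_eq, Set.mem_image, Finset.coe_filter, Finset.mem_Ico,
      Int.abs_eq_natAbs]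
    constructor
    · rintro ⟨h1, h2, h3⟩
      lift m to ℕ using by positivity
      exact ⟨m, ⟨⟨by omega, by omega⟩, Nat.coprime_comm.mp h3⟩, rfl⟩
    · rintro ⟨k, ⟨⟨h1, h2⟩, h3⟩, rfl⟩
      exact ⟨by omega, by omega, Nat.coprime_comm.mp h3⟩
  rw [hset, Set.ncard_image_of_injective _ Nat.cast_injective, Set.ncard_coe_finset,
    Nat.filter_coprime_Ico_eq_totient]

theorem EnM_subset_of_modEq {n m₁ m₂ : ℤ} (h : m₁ ≡ m₂ [ZMOD n]) : EnM n m₁ ⊆ EnM n m₂ := by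
  obtain ⟨k, hk⟩ := Int.modEq_iff_dvd.mp h
  let U : Matrix.SpecialLinearGroup (Fin 2) ℤ := ⟨!![1, -k; 0, 1], by simp [det_fin_two_of]⟩
  have hU : (U : Matrix (Fin 2) (Fin 2) ℤ) * !![1, m₂; 0, n] = !![1, m₁; 0, n] := by
    rw [show (U : Matrix (Fin 2) (Fin 2) ℤ) = !![1, -k; 0, 1] from rfl, mul_fin_two]
    simp only [mul_one, mul_zero, add_zero, one_mul, neg_mul, zero_mul, zero_add,
      EmbeddingLike.apply_eq_iff_eq, vecCons_inj, and_true, true_and]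
    linear_combination hk
  rintro A ⟨γ, hγ⟩
  refine ⟨γ * U, ?_⟩
  rw [hγ, Matrix.SpecialLinearGroup.coe_mul, Matrix.mul_assoc, hU]

theorem modEq_of_mem_EnM_of_mem_EnM {n m₁ m₂ : ℤ} {A : Matrix (Fin 2) (Fin 2) ℤ}
    (h₁ : A ∈ EnM n m₁) (h₂ : A ∈ EnM n m₂) : m₁ ≡ m₂ [ZMOD n] := by
  obtain ⟨γ₁, hγ₁⟩ := h₁
  obtain ⟨γ₂, hγ₂⟩ := h₂
  set δ : Matrix.SpecialLinearGroup (Fin 2) ℤ := γ₂⁻¹ * γ₁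
  have hδ : (δ : Matrix (Fin 2) (Fin 2) ℤ) * !![1, m₁; 0, n] = !![1, m₂; 0, n] := by
    rw [Matrix.SpecialLinearGroup.coe_mul, Matrix.mul_assoc, ← hγ₁, hγ₂, ← Matrix.mul_assoc,
      ← Matrix.SpecialLinearGroup.coe_mul, inv_mul_cancel, Matrix.SpecialLinearGroup.coe_one,
      Matrix.one_mul]
  have h00 : δ 0 0 = 1 := by simpa [mul_apply, Fin.sum_univ_two] using congrFun₂ hδ 0 0
  have h01 : δ 0 0 * m₁ + δ 0 1 * n = m₂ := by
    simpa [mul_apply, Fin.sum_univ_two] using congrFun₂ hδ 0 1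
  exact Int.modEq_iff_dvd.mpr ⟨δ 0 1, by rw [← h01, h00]; ring⟩

theorem mem_DnV_iff_isCoprime_of_mem_EnM {n m : ℤ} {A : Matrix (Fin 2) (Fin 2) ℤ}
    (hA : A ∈ EnM n m) : A ∈ DnV n ↔ IsCoprime m n := by
  obtain ⟨γ, rfl⟩ := hA
  simp only [DnV, Set.mem_ofPred_eq, ← Int.isCoprime_iff_gcd_eq_one,
    isCoprime_mul_apply_iff_of_det_eq_one γ.det_coe, det_mul, γ.det_coe, det_fin_two_of]
  simp [isCoprime_one_left]

theorem exists_mem_EnM_of_isCoprime_of_det_eq {n : ℤ} {A : Matrix (Fin 2) (Fin 2) ℤ}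
    (h : IsCoprime (A 0 0) (A 1 0)) (hdet : A.det = n) : ∃ m, A ∈ EnM n m := by
  obtain ⟨u, v, huv⟩ := h
  rw [det_fin_two] at hdet
  refine ⟨u * A 0 1 + v * A 1 1, ⟨!![A 0 0, -v; A 1 0, u], ?_⟩, ?_⟩
  · rw [det_fin_two_of]; linear_combination huv
  · ext i j
    fin_cases i <;> fin_cases j <;> simp [mul_apply, Fin.sum_univ_two]
    · linear_combination (-A 0 1) * huv - v * hdet
    · linear_combination (-A 1 1) * huv + u * hdet

/-- For nonzero `n`, `D_n^V` is the disjoint union over `m` with `1 ≤ m ≤ |n|`,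
`gcd(m,n) = 1` of the orbits `E_n^(m)`; the number of such orbits is `φ(|n|)`. -/
theorem DnV_orbit_decomposition (n : ℤ) (hn : n ≠ 0) :
    (DnV n = ⋃ m ∈ {m : ℤ | 1 ≤ m ∧ m ≤ |n| ∧ Int.gcd m n = 1}, EnM n m) ∧
    (∀ m₁ m₂ : ℤ, 1 ≤ m₁ → m₁ ≤ |n| → Int.gcd m₁ n = 1 →
      1 ≤ m₂ → m₂ ≤ |n| → Int.gcd m₂ n = 1 → m₁ ≠ m₂ → Disjoint (EnM n m₁) (EnM n m₂)) ∧
    {m : ℤ | 1 ≤ m ∧ m ≤ |n| ∧ Int.gcd m n = 1}.ncard = Nat.totient n.natAbs := by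
  refine ⟨?_, ?_, ncard_setOf_coprime_Icc_abs_eq_totient n⟩
  · ext A
    simp only [Set.mem_iUnion, Set.mem_ofPred_eq, exists_prop, ← Int.isCoprime_iff_gcd_eq_one]
    constructor
    · intro hA
      obtain ⟨x, hx⟩ := exists_mem_EnM_of_isCoprime_of_det_eq
        (Int.isCoprime_iff_gcd_eq_one.mpr hA.1) hA.2.2
      obtain ⟨m, hm₁, hm₂, hmx⟩ := Int.exists_one_le_le_abs_modEq hn x
      have hxn : IsCoprime x n := (mem_DnV_iff_isCoprime_of_mem_EnM hx).mp hA
      exact ⟨m, ⟨hm₁, hm₂, hmx.isCoprime_iff.mpr hxn⟩, EnM_subset_of_modEq hmx.symm hx⟩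
    · rintro ⟨m, ⟨-, -, hmn⟩, hA⟩
      exact (mem_DnV_iff_isCoprime_of_mem_EnM hA).mpr hmn
  · intro m₁ m₂ h₁ h₁' _ h₂ h₂' _ hne
    refine Set.disjoint_left.mpr fun A hA₁ hA₂ => hne ?_
    exact Int.eq_of_modEq_of_one_le_le_abs (modEq_of_mem_EnM_of_mem_EnM hA₁ hA₂) h₁ h₁' h₂ h₂'
end
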